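/- (Sufficiency part of the representation of irrotational metric anomalies.) Let L be a connection on Ω and g a metric on Ω with non-metricity Q and lowered curvature R. Suppose (i) the skew part of R in its last two indices vanishes identically: R_{ijkl} = R_{ijlk} on Ω (i.e. θ = 0); (ii) there is a smooth field q : Ω → Sym(3,ℝ) of symmetric 3×3 matrices with Q_{kij} = −2∇_k q_{ij} on Ω, where ∇_k q_{ij} := ∂_k q_{ij} − L^p_{ki} q_{pj} − L^p_{kj} q_{ip}; and (iii) the symmetric matrix field g − 2q is positive definite at every point of Ω. Then the symmetric part of R in its last two indices also vanishes identically, R_{ijkl} + R_{ijlk} = 0 (i.e. ζ = 0); hence R_{ijkl} ≡ 0 on Ω. -/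

import Mathlib

noncomputable section

/-- Points of ℝ³. -/
abbrev E3 := Fin 3 → ℝ

/-- Partial derivative of `f` along the `j`-th coordinate at `x`. -/
def pd (f : E3 → ℝ) (j : Fin 3) (x : E3) : ℝ :=
  fderiv ℝ f x (Pi.single j 1)

/-- A connection coefficient field: `L x i j k = L^i_{jk}(x)`. -/
abbrev Conn := E3 → Fin 3 → Fin 3 → Fin 3 → ℝ

/-- Smoothness of a connection on `Ω`. -/
def ConnSmooth (L : Conn) (Ω : Set E3) : Prop :=
  ∀ i j k, ContDiffOn ℝ (⊤ : ℕ∞) (fun x => L x i j k) Ω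

/-- Torsion of a connection: `torsion L x i j k = T_{jk}^i = (1/2)(L^i_{jk} - L^i_{kj})`. -/
def torsion (L : Conn) (x : E3) (i j k : Fin 3) : ℝ :=
  (L x i j k - L x i k j) / 2

/-- Curvature of a connection: `curv L x p j i q = R_{jiq}^p`. -/
def curv (L : Conn) (x : E3) (p j i q : Fin 3) : ℝ :=
  pd (fun y => L y p i q) j x - pd (fun y => L y p j q) i x
    + ∑ h, (L x h i q * L x p j h - L x h j q * L x p i h)

/-- A metric field. -/
abbrev Metric := E3 → Matrix (Fin 3) (Fin 3) ℝ

/-- `g` is a metric on `Ω`: smooth entries, symmetric and positive definite on `Ω`. -/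
def MetricOn (g : Metric) (Ω : Set E3) : Prop :=
  (∀ i j, ContDiffOn ℝ (⊤ : ℕ∞) (fun x => g x i j) Ω) ∧
  (∀ x ∈ Ω, (g x).IsSymm) ∧ (∀ x ∈ Ω, (g x).PosDef)

/-- Non-metricity of `(L, g)`: `nm L g x k i j = Q_{kij}`. -/
def nm (L : Conn) (g : Metric) (x : E3) (k i j : Fin 3) : ℝ :=
  - pd (fun y => g y i j) k x + ∑ p, (L x p k j * g x i p + L x p k i * g x j p)

/-- Lowered curvature: `lcurv L g x i j k l = R_{ijkl} = g_{lp} R_{ijk}^p`. -/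
def lcurv (L : Conn) (g : Metric) (x : E3) (i j k l : Fin 3) : ℝ :=
  ∑ p, g x l p * curv L x p i j k

/-- Covariant derivative of a symmetric tensor field `q`:
`covq L q k i j x = ∇_k q_{ij}`. -/
def covq (L : Conn) (q : E3 → Matrix (Fin 3) (Fin 3) ℝ) (k i j : Fin 3) (x : E3) : ℝ :=
  pd (fun y => q y i j) k x - ∑ p, (L x p k i * q x p j + L x p k j * q x i p)

/-!
Put `G = g - 2q`. The representation `Q = -2∇q` says precisely that `G` is parallel, `∇G = 0`,
so the Ricci identity makes the curvature matrix `A = (R_{ijk}^p)_{p,k}` skew-adjoint for `G`,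
while `θ = 0` makes it self-adjoint for `g`. Since `g` and `G` are both positive definite,
`tr A²` is then both `≥ 0` and `≤ 0`, and vanishes only for `A = 0`.
-/

namespace Matrix

open scoped MatrixOrder

variable {n : Type*} [Fintype n]

lemma trace_transpose_mul_mul_mul_eq (B Y : Matrix n n ℝ) :
    (Bᵀ * B * Y * (Bᵀ * B) * Yᵀ).trace = (B * Y * Bᵀ * (B * Y * Bᵀ)ᵀ).trace := by
  rw [show Bᵀ * B * Y * (Bᵀ * B) * Yᵀ = Bᵀ * (B * Y * Bᵀ * B * Yᵀ) by simp only [Matrix.mul_assoc],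
    trace_mul_comm]
  simp only [transpose_mul, transpose_transpose, Matrix.mul_assoc]

variable [DecidableEq n]

lemma PosSemidef.exists_eq_transpose_mul_self {Q : Matrix n n ℝ} (hQ : Q.PosSemidef) :
    ∃ B : Matrix n n ℝ, Q = Bᵀ * B := by
  simpa [star_eq_conjTranspose] using CStarAlgebra.nonneg_iff_eq_star_mul_self.mp hQ.nonneg

lemma PosSemidef.trace_mul_mul_mul_transpose_nonneg {Q : Matrix n n ℝ} (hQ : Q.PosSemidef)
    (Y : Matrix n n ℝ) : 0 ≤ (Q * Y * Q * Yᵀ).trace := by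
  obtain ⟨B, rfl⟩ := hQ.exists_eq_transpose_mul_self
  rw [trace_transpose_mul_mul_mul_eq]
  simpa using (posSemidef_self_mul_conjTranspose (B * Y * Bᵀ)).trace_nonneg

lemma PosDef.eq_zero_of_trace_mul_mul_mul_transpose_eq_zero {Q Y : Matrix n n ℝ} (hQ : Q.PosDef)
    (h : (Q * Y * Q * Yᵀ).trace = 0) : Y = 0 := by
  obtain ⟨B, hB⟩ := hQ.posSemidef.exists_eq_transpose_mul_self
  rw [hB, trace_transpose_mul_mul_mul_eq, ← conjTranspose_eq_transpose_of_trivial (B * Y * Bᵀ),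
    trace_mul_conjTranspose_self_eq_zero_iff] at h
  have hQYQ : Q * Y * Q = 0 := by
    rw [hB, show Bᵀ * B * Y * (Bᵀ * B) = Bᵀ * (B * Y * Bᵀ) * B by simp only [Matrix.mul_assoc], h]
    simp
  have hQ' := hQ.isUnit
  simpa [hQ'.mul_right_eq_zero, hQ'.mul_left_eq_zero] using hQYQ

theorem eq_zero_of_isSelfAdjoint_of_isSkewAdjoint {P H A : Matrix n n ℝ} (hP : P.PosDef)
    (hH : H.PosDef) (hA : P.IsSelfAdjoint A) (hA' : H.IsSkewAdjoint A) : A = 0 := by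
  have hPinv : P⁻¹ * (P * A) = A := by
    rw [← Matrix.mul_assoc, nonsing_inv_mul _ ((isUnit_iff_isUnit_det P).1 hP.isUnit), one_mul]
  have hHinv : H⁻¹ * (H * A) = A := by
    rw [← Matrix.mul_assoc, nonsing_inv_mul _ ((isUnit_iff_isUnit_det H).1 hH.isUnit), one_mul]
  have hS : (P * A)ᵀ = P * A := by
    rw [transpose_mul, ← conjTranspose_eq_transpose_of_trivial P, hP.isHermitian.eq]; exact hA
  have hK : (H * A)ᵀ = -(H * A) := by
    rw [transpose_mul, ← conjTranspose_eq_transpose_of_trivial H, hH.isHermitian.eq, hA',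
      Matrix.mul_neg]
  have htrP : (A * A).trace = (P⁻¹ * (P * A) * P⁻¹ * (P * A)ᵀ).trace := by
    rw [hS, Matrix.mul_assoc _ P⁻¹, hPinv]
  have htrH : (A * A).trace = -(H⁻¹ * (H * A) * H⁻¹ * (H * A)ᵀ).trace := by
    rw [hK, Matrix.mul_neg, trace_neg, neg_neg, Matrix.mul_assoc _ H⁻¹, hHinv]
  have hK0 : H * A = 0 := by
    refine hH.inv.eq_zero_of_trace_mul_mul_mul_transpose_eq_zero (le_antisymm ?_ ?_)
    · linarith [hP.inv.posSemidef.trace_mul_mul_mul_transpose_nonneg (P * A)]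
    · exact hH.inv.posSemidef.trace_mul_mul_mul_transpose_nonneg (H * A)
  rw [← hHinv, hK0, Matrix.mul_zero]

end Matrix

section PartialDerivatives

variable {f h : E3 → ℝ} {x : E3} {j : Fin 3}

lemma pd_congr_of_eqOn {Ω : Set E3} (hΩ : IsOpen Ω) (hx : x ∈ Ω) (hfh : Set.EqOn f h Ω) :
    pd f j x = pd h j x := by
  rw [pd, pd, (hfh.eventuallyEq_of_mem (hΩ.mem_nhds hx)).fderiv_eq]

lemma pd_add (hf : DifferentiableAt ℝ f x) (hh : DifferentiableAt ℝ h x) :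
    pd (fun y => f y + h y) j x = pd f j x + pd h j x := by
  simp [pd, fderiv_fun_add hf hh]

lemma pd_sub (hf : DifferentiableAt ℝ f x) (hh : DifferentiableAt ℝ h x) :
    pd (fun y => f y - h y) j x = pd f j x - pd h j x := by
  simp [pd, fderiv_fun_sub hf hh]

lemma pd_const_mul (hf : DifferentiableAt ℝ f x) (c : ℝ) :
    pd (fun y => c * f y) j x = c * pd f j x := by
  simp [pd, fderiv_const_mul hf c]

lemma pd_mul (hf : DifferentiableAt ℝ f x) (hh : DifferentiableAt ℝ h x) :
    pd (fun y => f y * h y) j x = pd f j x * h x + f x * pd h j x := by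
  simp [pd, fderiv_fun_mul hf hh]
  ring

lemma pd_sum {F : Fin 3 → E3 → ℝ} (hF : ∀ p, DifferentiableAt ℝ (F p) x) :
    pd (fun y => ∑ p, F p y) j x = ∑ p, pd (F p) j x := by
  simp [pd, fderiv_fun_sum (fun p _ => hF p)]

lemma pd_pd_comm (hf : ContDiffAt ℝ 2 f x) (i j : Fin 3) :
    pd (fun y => pd f i y) j x = pd (fun y => pd f j y) i x := by
  have hd : DifferentiableAt ℝ (fderiv ℝ f) x :=
    (hf.fderiv_right (m := 1) le_rfl).differentiableAt one_ne_zero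
  have hpd : ∀ a b : Fin 3, pd (fun y => pd f a y) b x
      = fderiv ℝ (fderiv ℝ f) x (Pi.single b 1) (Pi.single a 1) := by
    intro a b
    simp [pd, fderiv_clm_apply hd (differentiableAt_const _)]
  rw [hpd, hpd, hf.isSymmSndFDerivAt (by simp)]

end PartialDerivatives

section NonMetricity

variable (L : Conn) {g q : Metric} {x : E3}

lemma nm_eq_neg_covq (hq : (q x).IsSymm) (k i j : Fin 3) :
    nm L q x k i j = -covq L q k i j x := by
  have hqji : ∀ p, q x j p = q x p j := fun p => hq.apply p j
  simp only [nm, covq, hqji]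
  rw [neg_sub, neg_add_eq_sub]
  exact congrArg (· - _) (Finset.sum_congr rfl fun p _ => add_comm _ _)

lemma nm_sub_smul {i j : Fin 3} (hg : DifferentiableAt ℝ (fun y => g y i j) x)
    (hq : DifferentiableAt ℝ (fun y => q y i j) x) (c : ℝ) (k : Fin 3) :
    nm L (fun y => g y - c • q y) x k i j = nm L g x k i j - c * nm L q x k i j := by
  have hpd : pd (fun y => (g y - c • q y) i j) k x
      = pd (fun y => g y i j) k x - c * pd (fun y => q y i j) k x := by
    simp only [Matrix.sub_apply, Matrix.smul_apply, smul_eq_mul]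
    rw [pd_sub hg (hq.const_mul c), pd_const_mul hq]
  simp only [nm]
  rw [hpd]
  simp only [Matrix.sub_apply, Matrix.smul_apply, smul_eq_mul, Fin.sum_univ_three]
  ring

lemma nm_sub_smul_eq_zero {i j : Fin 3} (hg : DifferentiableAt ℝ (fun y => g y i j) x)
    (hqd : DifferentiableAt ℝ (fun y => q y i j) x) (hq : (q x).IsSymm) (c : ℝ) (k : Fin 3)
    (hrep : nm L g x k i j = -c * covq L q k i j x) :
    nm L (fun y => g y - c • q y) x k i j = 0 := by
  rw [nm_sub_smul L hg hqd, hrep, nm_eq_neg_covq L hq]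
  ring

end NonMetricity

/-- The Ricci identity for a parallel metric: differentiating `∂_m G_{kl} = L^p_{ml} G_{kp} +
L^p_{mk} G_{lp}` once more and antisymmetrising the two derivatives leaves exactly
`R_{ijkl} + R_{ijlk}`. -/
theorem lcurv_add_lcurv_swap_eq_zero_of_nm_eq_zero {Ω : Set E3} (hΩ : IsOpen Ω) {L : Conn}
    (hL : ∀ p a b, DifferentiableOn ℝ (fun y => L y p a b) Ω) {G : Metric}
    (hG : ∀ a b, ContDiffOn ℝ 2 (fun y => G y a b) Ω) (hGsym : ∀ x ∈ Ω, (G x).IsSymm)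
    (hnm : ∀ x ∈ Ω, ∀ m a b, nm L G x m a b = 0) {x : E3} (hx : x ∈ Ω) (i j k l : Fin 3) :
    lcurv L G x i j k l + lcurv L G x i j l k = 0 := by
  have hcompat : ∀ y ∈ Ω, ∀ m a b, pd (fun z => G z a b) m y
      = ∑ p, (L y p m b * G y a p + L y p m a * G y b p) := by
    intro y hy m a b
    have h := hnm y hy m a b
    rwa [nm, neg_add_eq_zero] at h
  have hmem : Ω ∈ nhds x := hΩ.mem_nhds hx
  have dL : ∀ p a b, DifferentiableAt ℝ (fun y => L y p a b) x := fun p a b =>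
    (hL p a b).differentiableAt hmem
  have dG : ∀ a b, DifferentiableAt ℝ (fun y => G y a b) x := fun a b =>
    ((hG a b).contDiffAt hmem).differentiableAt two_ne_zero
  have hpd_pd : ∀ m n, pd (fun y => pd (fun z => G z k l) m y) n x
      = ∑ p, (pd (fun y => L y p m l) n x * G x k p + L x p m l * pd (fun y => G y k p) n x
          + (pd (fun y => L y p m k) n x * G x l p + L x p m k * pd (fun y => G y l p) n x)) := by
    intro m n
    rw [pd_congr_of_eqOn hΩ hx (fun y hy => hcompat y hy m k l),
      pd_sum fun p => ((dL p m l).fun_mul (dG k p)).fun_add ((dL p m k).fun_mul (dG l p))]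
    refine Finset.sum_congr rfl fun p _ => ?_
    rw [pd_add ((dL p m l).fun_mul (dG k p)) ((dL p m k).fun_mul (dG l p)),
      pd_mul (dL p m l) (dG k p), pd_mul (dL p m k) (dG l p)]
  have hcomm := pd_pd_comm ((hG k l).contDiffAt hmem) j i
  rw [hpd_pd, hpd_pd] at hcomm
  simp only [hcompat x hx] at hcomm
  have hGx : ∀ a b, G x a b = G x b a := fun a b => (hGsym x hx).apply b a
  simp only [lcurv, curv, Fin.sum_univ_three] at hcomm ⊢
  simp only [hGx 1 0, hGx 2 0, hGx 2 1] at hcomm ⊢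
  linear_combination hcomm

section CurvatureMatrix

open Matrix

variable (L : Conn) (x : E3) (i j : Fin 3) {g : Metric}

def curvMatrix : Matrix (Fin 3) (Fin 3) ℝ :=
  Matrix.of fun p k => curv L x p i j k

lemma mul_curvMatrix_apply (a b : Fin 3) :
    (g x * curvMatrix L x i j) a b = lcurv L g x i j b a :=
  rfl

lemma transpose_curvMatrix_mul_apply (hg : (g x).IsSymm) (a b : Fin 3) :
    ((curvMatrix L x i j)ᵀ * g x) a b = lcurv L g x i j a b := by
  simp only [Matrix.mul_apply, Matrix.transpose_apply, curvMatrix, Matrix.of_apply, lcurv,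
    hg.apply b, mul_comm]

lemma isSelfAdjoint_curvMatrix (hg : (g x).IsSymm)
    (hsymm : ∀ k l, lcurv L g x i j k l = lcurv L g x i j l k) :
    (g x).IsSelfAdjoint (curvMatrix L x i j) := by
  ext a b
  rw [transpose_curvMatrix_mul_apply L x i j hg, mul_curvMatrix_apply, hsymm]

lemma isSkewAdjoint_curvMatrix (hg : (g x).IsSymm)
    (hskew : ∀ k l, lcurv L g x i j k l + lcurv L g x i j l k = 0) :
    (g x).IsSkewAdjoint (curvMatrix L x i j) := by
  ext a b
  rw [transpose_curvMatrix_mul_apply L x i j hg, Matrix.mul_neg, Matrix.neg_apply,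
    mul_curvMatrix_apply, eq_neg_iff_add_eq_zero, hskew]

end CurvatureMatrix

theorem irrotational_metric_anomalies_sufficiency_general
    (Ω : Set E3) (hΩ : IsOpen Ω)
    (L : Conn) (hL : ConnSmooth L Ω) (g : Metric) (hg : MetricOn g Ω)
    (htheta : ∀ x ∈ Ω, ∀ i j k l : Fin 3, lcurv L g x i j k l = lcurv L g x i j l k)
    (q : E3 → Matrix (Fin 3) (Fin 3) ℝ)
    (hqsmooth : ∀ i j, ContDiffOn ℝ (⊤ : ℕ∞) (fun x => q x i j) Ω)
    (hqsym : ∀ x ∈ Ω, (q x).IsSymm)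
    (hrep : ∀ x ∈ Ω, ∀ k i j : Fin 3, nm L g x k i j = -2 * covq L q k i j x)
    (hpos : ∀ x ∈ Ω, (g x - 2 • q x).PosDef) :
    (∀ x ∈ Ω, ∀ i j k l : Fin 3, lcurv L g x i j k l + lcurv L g x i j l k = 0) ∧
    (∀ x ∈ Ω, ∀ i j k l : Fin 3, lcurv L g x i j k l = 0) := by
  obtain ⟨hgsmooth, hgsym, hgpos⟩ := hg
  set G : Metric := fun y => g y - (2 : ℝ) • q y
  have hGpos : ∀ x ∈ Ω, (G x).PosDef := fun x hx => by
    simpa only [G, two_smul, two_nsmul] using hpos x hx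
  have hGsym : ∀ x ∈ Ω, (G x).IsSymm := fun x hx => (hgsym x hx).sub ((hqsym x hx).smul 2)
  have hGsmooth : ∀ a b, ContDiffOn ℝ 2 (fun y => G y a b) Ω := fun a b =>
    ((hgsmooth a b).sub ((hqsmooth a b).const_smul (2 : ℝ))).of_le (WithTop.coe_le_coe.2 le_top)
  have hdiff : ∀ {f : E3 → ℝ}, ContDiffOn ℝ (⊤ : ℕ∞) f Ω → ∀ x ∈ Ω, DifferentiableAt ℝ f x :=
    fun hf x hx => (hf.differentiableOn (by simp)).differentiableAt (hΩ.mem_nhds hx)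
  have hGnm : ∀ x ∈ Ω, ∀ k a b, nm L G x k a b = 0 := fun x hx k a b =>
    nm_sub_smul_eq_zero L (hdiff (hgsmooth a b) x hx) (hdiff (hqsmooth a b) x hx) (hqsym x hx)
      2 k (hrep x hx k a b)
  have hvanish : ∀ x ∈ Ω, ∀ i j k l, lcurv L g x i j k l = 0 := by
    intro x hx i j k l
    have hA : curvMatrix L x i j = 0 :=
      Matrix.eq_zero_of_isSelfAdjoint_of_isSkewAdjoint (hgpos x hx) (hGpos x hx)
        (isSelfAdjoint_curvMatrix L x i j (hgsym x hx) (htheta x hx i j))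
        (isSkewAdjoint_curvMatrix L x i j (hGsym x hx)
          (lcurv_add_lcurv_swap_eq_zero_of_nm_eq_zero hΩ
            (fun p a b => (hL p a b).differentiableOn (by simp)) hGsmooth hGsym hGnm hx i j))
    rw [← mul_curvMatrix_apply, hA, Matrix.mul_zero, Matrix.zero_apply]
  exact ⟨fun x hx i j k l => by rw [hvanish x hx, hvanish x hx, add_zero], hvanish⟩

/-- Sufficiency part of the representation of irrotational metric anomalies: if
`θ = 0`, `Q_{kij} = -2∇_k q_{ij}` with `q` smooth and symmetric, and `g - 2q` is
positive definite, then `ζ = 0`, hence the lowered curvature vanishes identically. -/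
theorem irrotational_metric_anomalies_sufficiency
    (Ω : Set E3) (hΩ : IsOpen Ω) (hne : Ω.Nonempty)
    (L : Conn) (hL : ConnSmooth L Ω) (g : Metric) (hg : MetricOn g Ω)
    (htheta : ∀ x ∈ Ω, ∀ i j k l : Fin 3, lcurv L g x i j k l = lcurv L g x i j l k)
    (q : E3 → Matrix (Fin 3) (Fin 3) ℝ)
    (hqsmooth : ∀ i j, ContDiffOn ℝ (⊤ : ℕ∞) (fun x => q x i j) Ω)
    (hqsym : ∀ x ∈ Ω, (q x).IsSymm)
    (hrep : ∀ x ∈ Ω, ∀ k i j : Fin 3, nm L g x k i j = -2 * covq L q k i j x)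
    (hpos : ∀ x ∈ Ω, (g x - 2 • q x).PosDef) :
    (∀ x ∈ Ω, ∀ i j k l : Fin 3, lcurv L g x i j k l + lcurv L g x i j l k = 0) ∧
    (∀ x ∈ Ω, ∀ i j k l : Fin 3, lcurv L g x i j k l = 0) :=
  irrotational_metric_anomalies_sufficiency_general Ω hΩ L hL g hg htheta q hqsmooth hqsym hrep hpos
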